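/- arXiv:1608.00928 — 4 statements merged into one kernel-verified Lean document; each statement's English description precedes it below -/
import Mathlib

section
/- For all real numbers a₁, a₂ ≥ 0 and b₁, b₂ > 0 and any real p > 1, one has |a₁ - a₂|^p ≥ |b₁ - b₂|^{p-2}(b₁ - b₂)·(a₁^p / b₁^{p-1} - a₂^p / b₂^{p-1}). -/
/-!
Radon's inequality `(∑ aᵢ) ^ p / (∑ bᵢ) ^ (p - 1) ≤ ∑ aᵢ ^ p / bᵢ ^ (p - 1)` is Jensen's inequality
for `t ↦ t ^ p` at the points `aᵢ / bᵢ` with weights `bᵢ / ∑ bⱼ`. The Picone expression is symmetric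
under swapping the indices, so let `b₂ < b₁`. Writing `a₁ ≤ |a₁ - a₂| + a₂` and
`b₁ = (b₁ - b₂) + b₂`, Radon's inequality gives
`a₁ ^ p / b₁ ^ (p - 1) ≤ |a₁ - a₂| ^ p / (b₁ - b₂) ^ (p - 1) + a₂ ^ p / b₂ ^ (p - 1)`,
which is the claim after multiplying by `(b₁ - b₂) ^ (p - 1)`.
-/

open Real Finset

theorem rpow_sum_div_rpow_sum_le {ι : Type*} (s : Finset ι) {p : ℝ} (hp : 1 ≤ p) {a b : ι → ℝ}
    (ha : ∀ i ∈ s, 0 ≤ a i) (hb : ∀ i ∈ s, 0 < b i) :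
    (∑ i ∈ s, a i) ^ p / (∑ i ∈ s, b i) ^ (p - 1) ≤ ∑ i ∈ s, a i ^ p / b i ^ (p - 1) := by
  rcases s.eq_empty_or_nonempty with rfl | hs
  · simp [zero_rpow (by linarith : p ≠ 0)]
  set B := ∑ i ∈ s, b i
  have hB : 0 < B := sum_pos hb hs
  have hscale {x y : ℝ} (hx : 0 ≤ x) (hy : 0 < y) : x ^ p / y ^ (p - 1) = y * (x / y) ^ p := by
    rw [rpow_sub_one hy.ne', div_rpow hx hy.le]
    field_simp
  have hjensen := (convexOn_rpow hp).map_sum_le (t := s) (w := fun i => b i / B)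
    (p := fun i => a i / b i) (fun i hi => (div_pos (hb i hi) hB).le)
    (by rw [← sum_div, div_self hB.ne'])
    (fun i hi => Set.mem_Ici.2 (div_nonneg (ha i hi) (hb i hi).le))
  have hmean : ∑ i ∈ s, b i / B * (a i / b i) = (∑ i ∈ s, a i) / B := by
    rw [sum_div]; refine sum_congr rfl fun i hi => ?_
    have := (hb i hi).ne'
    field_simp
  simp only [smul_eq_mul, hmean] at hjensen
  calc (∑ i ∈ s, a i) ^ p / B ^ (p - 1) = B * ((∑ i ∈ s, a i) / B) ^ p :=
        hscale (sum_nonneg ha) hB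
    _ ≤ B * ∑ i ∈ s, b i / B * (a i / b i) ^ p := by gcongr
    _ = ∑ i ∈ s, a i ^ p / b i ^ (p - 1) := by
      rw [mul_sum]; refine sum_congr rfl fun i hi => ?_
      rw [hscale (ha i hi) (hb i hi)]; field_simp

theorem abs_rpow_sub_two_mul_self_of_pos (p : ℝ) {d : ℝ} (hd : 0 < d) :
    |d| ^ (p - 2) * d = d ^ (p - 1) := by
  rw [abs_of_pos hd, show p - 1 = p - 2 + 1 by ring, rpow_add_one hd.ne']

theorem picone_of_lt {p a₁ a₂ b₁ b₂ : ℝ} (hp : 1 ≤ p) (ha₁ : 0 ≤ a₁) (ha₂ : 0 ≤ a₂)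
    (hb₂ : 0 < b₂) (hb : b₂ < b₁) :
    (b₁ - b₂) ^ (p - 1) * (a₁ ^ p / b₁ ^ (p - 1) - a₂ ^ p / b₂ ^ (p - 1)) ≤ |a₁ - a₂| ^ p := by
  have hd : 0 < b₁ - b₂ := sub_pos.2 hb
  have hb₁ : 0 < b₁ := hb₂.trans hb
  have hradon : (|a₁ - a₂| + a₂) ^ p / (b₁ - b₂ + b₂) ^ (p - 1) ≤
      |a₁ - a₂| ^ p / (b₁ - b₂) ^ (p - 1) + a₂ ^ p / b₂ ^ (p - 1) := by
    simpa only [Fin.sum_univ_two, Matrix.cons_val_zero, Matrix.cons_val_one] using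
      rpow_sum_div_rpow_sum_le univ hp (a := ![|a₁ - a₂|, a₂]) (b := ![b₁ - b₂, b₂])
      (by simp [Fin.forall_fin_two, ha₂]) (by simp [Fin.forall_fin_two, hd, hb₂])
  rw [sub_add_cancel] at hradon
  have hmono : a₁ ^ p / b₁ ^ (p - 1) ≤ (|a₁ - a₂| + a₂) ^ p / b₁ ^ (p - 1) := by
    gcongr
    linarith [le_abs_self (a₁ - a₂)]
  rw [← le_div_iff₀' (rpow_pos_of_pos hd _)]
  linarith

/-- Discrete Picone inequality. -/
theorem picone_inequality (p a₁ a₂ b₁ b₂ : ℝ) (hp : 1 < p)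
    (ha₁ : 0 ≤ a₁) (ha₂ : 0 ≤ a₂) (hb₁ : 0 < b₁) (hb₂ : 0 < b₂) :
    |b₁ - b₂| ^ (p - 2) * (b₁ - b₂) *
      (a₁ ^ p / b₁ ^ (p - 1) - a₂ ^ p / b₂ ^ (p - 1)) ≤ |a₁ - a₂| ^ p := by
  rcases lt_trichotomy b₁ b₂ with h | rfl | h
  · have key := picone_of_lt hp.le ha₂ ha₁ hb₁ h
    rw [abs_sub_comm b₁, ← neg_sub b₂ b₁, mul_neg,
      abs_rpow_sub_two_mul_self_of_pos p (sub_pos.2 h), abs_sub_comm]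
    linarith
  · simp only [sub_self, mul_zero, zero_mul]
    positivity
  · rw [abs_rpow_sub_two_mul_self_of_pos p (sub_pos.2 h)]
    exact picone_of_lt hp.le ha₁ ha₂ hb₂ h
end

section
/- Let p > 1 and let a₁, a₂ ≥ 0 and b₁, b₂ > 0. If equality holds in the Picone inequality, i.e. |a₁ - a₂|^p = |b₁ - b₂|^{p-2}(b₁ - b₂)(a₁^p / b₁^{p-1} - a₂^p / b₂^{p-1}), then there exists a constant k ≥ 0 such that a₁ = k·b₁ and a₂ = k·b₂. -/
/-!
Write `tᵢ = aᵢ / bᵢ`, and assume `b₂ < b₁` by symmetry (for `b₁ = b₂` the right-hand side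
vanishes, forcing `a₁ = a₂`). With `δ = b₁ - b₂` we have `a₁ - a₂ = t₁ δ + (t₁ - t₂) b₂`, and the
right-hand side equals `δ^(p-1) (t₁^p δ + (t₁^p - t₂^p) b₂)`. The tangent line of `x ↦ |x|^p` at
`t₁ δ` bounds `|a₁ - a₂|^p` below by `δ^(p-1) (t₁^p δ + p t₁^(p-1) (t₁ - t₂) b₂)`, and the tangent
line of `t ↦ t^p` at `t₁` gives `t₁^p - t₂^p ≤ p t₁^(p-1) (t₁ - t₂)`, strictly unless `t₁ = t₂`
since `t ↦ t^p` is strictly convex. So equality in Picone's inequality forces `t₁ = t₂`.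
-/

open Real

section Tangent

variable {p x y : ℝ}

lemma rpow_tangent_lt (hp : 1 < p) (hx : 0 ≤ x) (hy : 0 ≤ y) (hxy : x ≠ y) :
    y ^ p + p * y ^ (p - 1) * (x - y) < x ^ p := by
  rcases hy.eq_or_lt with rfl | hy
  · rw [zero_rpow (by linarith), zero_rpow (by linarith), mul_zero, zero_mul, zero_add]
    exact rpow_pos_of_pos (hx.lt_of_ne hxy.symm) p
  · have hbernoulli : 1 + p * (x / y - 1) < (x / y) ^ p := by
      simpa using one_add_mul_self_lt_rpow_one_add (s := x / y - 1)
        (by linarith [div_nonneg hx hy.le]) (by rwa [sub_ne_zero, ne_eq, div_eq_one_iff_eq hy.ne'])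
        hp
    have hyp : 0 < y ^ p := rpow_pos_of_pos hy p
    calc y ^ p + p * y ^ (p - 1) * (x - y) = y ^ p * (1 + p * (x / y - 1)) := by
          rw [rpow_sub_one hy.ne']; field_simp
      _ < y ^ p * (x / y) ^ p := mul_lt_mul_of_pos_left hbernoulli hyp
      _ = x ^ p := by rw [div_rpow hx hy.le, mul_div_cancel₀ _ hyp.ne']

lemma rpow_tangent_le_abs_rpow (hp : 1 < p) (hy : 0 ≤ y) (x : ℝ) :
    y ^ p + p * y ^ (p - 1) * (x - y) ≤ |x| ^ p := by
  have hslope : 0 ≤ p * y ^ (p - 1) := mul_nonneg (by linarith) (rpow_nonneg hy _)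
  calc y ^ p + p * y ^ (p - 1) * (x - y) ≤ y ^ p + p * y ^ (p - 1) * (|x| - y) := by
        gcongr; exact le_abs_self x
    _ ≤ |x| ^ p := by
        rcases eq_or_ne |x| y with h | h
        · simp [h]
        · exact (rpow_tangent_lt hp (abs_nonneg x) hy h).le

end Tangent

lemma rpow_div_rpow_sub_one (p : ℝ) {a b : ℝ} (ha : 0 ≤ a) (hb : 0 < b) :
    a ^ p / b ^ (p - 1) = (a / b) ^ p * b := by
  rw [div_rpow ha hb.le, rpow_sub_one hb.ne']
  field_simp

lemma picone_lt_of_lt {p t₁ t₂ b₁ b₂ : ℝ} (hp : 1 < p) (ht₁ : 0 ≤ t₁) (ht₂ : 0 ≤ t₂)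
    (ht : t₁ ≠ t₂) (hb₂ : 0 < b₂) (hb : b₂ < b₁) :
    (b₁ - b₂) ^ (p - 1) * (t₁ ^ p * b₁ - t₂ ^ p * b₂) < |t₁ * b₁ - t₂ * b₂| ^ p := by
  obtain ⟨δ, hδ0, rfl⟩ : ∃ δ, 0 < δ ∧ b₁ = b₂ + δ := ⟨b₁ - b₂, sub_pos.mpr hb, by ring⟩
  rw [add_sub_cancel_left]
  have hconvex := rpow_tangent_lt hp ht₂ ht₁ ht.symm
  calc δ ^ (p - 1) * (t₁ ^ p * (b₂ + δ) - t₂ ^ p * b₂)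
        = δ ^ (p - 1) * (t₁ ^ p * δ + (t₁ ^ p - t₂ ^ p) * b₂) := by ring
    _ < δ ^ (p - 1) * (t₁ ^ p * δ + p * t₁ ^ (p - 1) * (t₁ - t₂) * b₂) := by
        gcongr; linarith
    _ = (t₁ * δ) ^ p + p * (t₁ * δ) ^ (p - 1) * (t₁ * (b₂ + δ) - t₂ * b₂ - t₁ * δ) := by
        rw [mul_rpow ht₁ hδ0.le, mul_rpow ht₁ hδ0.le, rpow_sub_one hδ0.ne']
        field_simp
        ring
    _ ≤ |t₁ * (b₂ + δ) - t₂ * b₂| ^ p := rpow_tangent_le_abs_rpow hp (mul_nonneg ht₁ hδ0.le) _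

lemma picone_lt {p a₁ a₂ b₁ b₂ : ℝ} (hp : 1 < p) (ha₁ : 0 ≤ a₁) (ha₂ : 0 ≤ a₂)
    (hb₁ : 0 < b₁) (hb₂ : 0 < b₂) (hne : a₁ / b₁ ≠ a₂ / b₂) :
    |b₁ - b₂| ^ (p - 2) * (b₁ - b₂) * (a₁ ^ p / b₁ ^ (p - 1) - a₂ ^ p / b₂ ^ (p - 1)) <
      |a₁ - a₂| ^ p := by
  wlog hb : b₂ ≤ b₁ generalizing a₁ a₂ b₁ b₂ with H
  · have := H ha₂ ha₁ hb₂ hb₁ hne.symm (le_of_not_ge hb)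
    rw [abs_sub_comm a₂, abs_sub_comm b₂] at this
    linarith
  rcases hb.eq_or_lt with rfl | hb
  · have ha : a₁ - a₂ ≠ 0 := sub_ne_zero.mpr fun h ↦ hne (by rw [h])
    rw [sub_self, mul_zero, zero_mul]
    exact rpow_pos_of_pos (abs_pos.mpr ha) p
  · have hδ : |b₁ - b₂| ^ (p - 2) * (b₁ - b₂) = (b₁ - b₂) ^ (p - 1) := by
      rw [abs_of_pos (sub_pos.mpr hb), ← rpow_add_one (sub_pos.mpr hb).ne']
      ring_nf
    have ha : a₁ - a₂ = a₁ / b₁ * b₁ - a₂ / b₂ * b₂ := by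
      rw [div_mul_cancel₀ _ hb₁.ne', div_mul_cancel₀ _ hb₂.ne']
    rw [hδ, rpow_div_rpow_sub_one p ha₁ hb₁, rpow_div_rpow_sub_one p ha₂ hb₂, ha]
    exact picone_lt_of_lt hp (div_nonneg ha₁ hb₁.le) (div_nonneg ha₂ hb₂.le) hne hb₂ hb

/-- Equality case in the discrete Picone inequality. -/
theorem picone_equality (p a₁ a₂ b₁ b₂ : ℝ) (hp : 1 < p)
    (ha₁ : 0 ≤ a₁) (ha₂ : 0 ≤ a₂) (hb₁ : 0 < b₁) (hb₂ : 0 < b₂)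
    (heq : |a₁ - a₂| ^ p =
      |b₁ - b₂| ^ (p - 2) * (b₁ - b₂) *
        (a₁ ^ p / b₁ ^ (p - 1) - a₂ ^ p / b₂ ^ (p - 1))) :
    ∃ k : ℝ, 0 ≤ k ∧ a₁ = k * b₁ ∧ a₂ = k * b₂ := by
  by_cases hratio : a₁ / b₁ = a₂ / b₂
  · refine ⟨a₁ / b₁, div_nonneg ha₁ hb₁.le, (div_mul_cancel₀ _ hb₁.ne').symm, ?_⟩
    rw [hratio, div_mul_cancel₀ _ hb₂.ne']
  · exact absurd heq (picone_lt hp ha₁ ha₂ hb₁ hb₂ hratio).ne'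
end

section
/- Let Ω ⊂ ℝ^N be a bounded measurable set, s ∈ (0,1), p ∈ (1,∞). There is a constant C = C(N, s, p) > 0 such that for every function u ∈ L^p(ℝ^N) vanishing a.e. outside Ω, ∫_{ℝ^N}∫_{ℝ^N} |u(x) - u(y)|^p / |x - y|^{N+sp} dx dy ≥ (C / |Ω|^{sp/N}) · ∫_Ω |u(x)|^p dx. -/
/-!
Fix `x ∈ Ω` and choose `R` so that the ball `B(x, R)` has measure `2|Ω|`; for the sup
norm of `Fin N → ℝ` this is `R = (2|Ω|)^{1/N} / 2`. At least half of that ball lies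
outside `Ω`, where `u = 0`, so the inner integral at `x` is at least
`|Ω| |u(x)|^p / R^{N+sp}`; integrating over `Ω` gives the inequality with
`|Ω| / R^{N+sp} = C |Ω|^{-sp/N}`.
-/

open MeasureTheory ENNReal

theorem le_measure_diff_of_two_mul_le {α : Type*} [MeasurableSpace α] {μ : Measure α}
    {s t : Set α} (hs : μ s ≠ ∞) (h : 2 * μ s ≤ μ t) : μ s ≤ μ (t \ s) := by
  have : μ s + μ s ≤ μ s + μ (t \ s) := calc
    μ s + μ s = 2 * μ s := (two_mul _).symm
    _ ≤ μ t := h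
    _ ≤ μ (t ∩ s) + μ (t \ s) := measure_le_inter_add_sdiff μ t s
    _ ≤ μ s + μ (t \ s) := by gcongr; exact Set.inter_subset_right
  exact (ENNReal.add_le_add_iff_left hs).mp this

section Gagliardo

variable {E : Type*} [NormedAddCommGroup E] [MeasurableSpace E] [OpensMeasurableSpace E]
  {μ : Measure E} {Ω : Set E} {u : E → ℝ} {p e R : ℝ}

theorem ofReal_div_rpow_mul_measure_le_lintegral (hΩ : MeasurableSet Ω) (hΩfin : μ Ω ≠ ∞)
    (hu : ∀ᵐ y ∂μ, y ∉ Ω → u y = 0) (he : 0 ≤ e) {x : E} (hx : x ∈ Ω)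
    (hball : 2 * μ Ω ≤ μ (Metric.ball x R)) :
    ENNReal.ofReal (|u x| ^ p / R ^ e) * μ Ω ≤
      ∫⁻ y, ENNReal.ofReal (|u x - u y| ^ p / ‖x - y‖ ^ e) ∂μ := by
  set S := Metric.ball x R \ Ω
  have hbound : ∀ᵐ y ∂μ.restrict S, ENNReal.ofReal (|u x| ^ p / R ^ e) ≤
      ENNReal.ofReal (|u x - u y| ^ p / ‖x - y‖ ^ e) := by
    refine (ae_restrict_iff' (measurableSet_ball.diff hΩ)).2 (hu.mono fun y huy hy => ?_)
    obtain ⟨hyR, hyΩ⟩ := hy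
    have hxy : 0 < ‖x - y‖ := norm_pos_iff.2 (sub_ne_zero.2 fun h => hyΩ (h ▸ hx))
    rw [Metric.mem_ball, dist_eq_norm, norm_sub_rev] at hyR
    rw [huy hyΩ, sub_zero]
    gcongr
  calc ENNReal.ofReal (|u x| ^ p / R ^ e) * μ Ω
      ≤ ENNReal.ofReal (|u x| ^ p / R ^ e) * μ S := by
        gcongr _ * ?_; exact le_measure_diff_of_two_mul_le hΩfin hball
    _ = ∫⁻ _ in S, ENNReal.ofReal (|u x| ^ p / R ^ e) ∂μ := (setLIntegral_const _ _).symm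
    _ ≤ ∫⁻ y in S, ENNReal.ofReal (|u x - u y| ^ p / ‖x - y‖ ^ e) ∂μ := lintegral_mono_ae hbound
    _ ≤ ∫⁻ y, ENNReal.ofReal (|u x - u y| ^ p / ‖x - y‖ ^ e) ∂μ := setLIntegral_le_lintegral _ _

theorem measure_div_rpow_mul_setLIntegral_le_gagliardo (hΩ : MeasurableSet Ω)
    (hΩfin : μ Ω ≠ ∞) (hu : ∀ᵐ y ∂μ, y ∉ Ω → u y = 0) (he : 0 ≤ e) (hR : 0 < R)
    (hball : ∀ x ∈ Ω, 2 * μ Ω ≤ μ (Metric.ball x R)) :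
    μ Ω / ENNReal.ofReal (R ^ e) * ∫⁻ x in Ω, ENNReal.ofReal (|u x| ^ p) ∂μ ≤
      ∫⁻ x, ∫⁻ y, ENNReal.ofReal (|u x - u y| ^ p / ‖x - y‖ ^ e) ∂μ ∂μ := by
  have hRe : 0 < R ^ e := Real.rpow_pos_of_pos hR e
  calc μ Ω / ENNReal.ofReal (R ^ e) * ∫⁻ x in Ω, ENNReal.ofReal (|u x| ^ p) ∂μ
      = ∫⁻ x in Ω, ENNReal.ofReal (|u x| ^ p / R ^ e) * μ Ω ∂μ := by
        rw [← lintegral_const_mul' _ _ (ENNReal.div_ne_top hΩfin (by simpa using hRe))]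
        refine lintegral_congr fun x => ?_
        rw [ENNReal.ofReal_div_of_pos hRe, ← ENNReal.mul_div_right_comm,
          ← ENNReal.mul_div_right_comm, mul_comm]
    _ ≤ ∫⁻ x in Ω, ∫⁻ y, ENNReal.ofReal (|u x - u y| ^ p / ‖x - y‖ ^ e) ∂μ ∂μ :=
        setLIntegral_mono' hΩ fun x hx =>
          ofReal_div_rpow_mul_measure_le_lintegral hΩ hΩfin hu he hx (hball x hx)
    _ ≤ _ := setLIntegral_le_lintegral _ _

end Gagliardo

theorem volume_pi_ball_rpow_inv_div_two {N : ℕ} (hN : 0 < N) (x : Fin N → ℝ) {V : ℝ}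
    (hV : 0 < V) :
    volume (Metric.ball x ((2 * V) ^ (N : ℝ)⁻¹ / 2)) = ENNReal.ofReal (2 * V) := by
  rw [Real.volume_pi_ball x (by positivity), Fintype.card_fin, mul_div_cancel₀ _ two_ne_zero,
    ← Real.rpow_natCast, ← Real.rpow_mul (by positivity),
    inv_mul_cancel₀ (Nat.cast_ne_zero.2 hN.ne'), Real.rpow_one]

theorem div_rpow_inv_div_two_rpow {N : ℕ} (hN : 0 < N) {V : ℝ} (hV : 0 < V) (a : ℝ) :
    V / ((2 * V) ^ (N : ℝ)⁻¹ / 2) ^ ((N : ℝ) + a) =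
      2 ^ ((1 - (N : ℝ)⁻¹) * (N + a)) / V ^ (a / N) := by
  have hN' : (N : ℝ) ≠ 0 := Nat.cast_ne_zero.2 hN.ne'
  have h2 : (2 : ℝ) ^ ((N : ℝ) + a) =
      2 ^ ((1 - (N : ℝ)⁻¹) * (N + a)) * 2 ^ ((N : ℝ)⁻¹ * (N + a)) := by
    rw [← Real.rpow_add two_pos]; ring_nf
  have hV' : V * V ^ (a / N) = V ^ ((N : ℝ)⁻¹ * (N + a)) := by
    rw [mul_add, inv_mul_cancel₀ hN', Real.rpow_add hV, Real.rpow_one, inv_mul_eq_div]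
  rw [Real.div_rpow (by positivity) zero_le_two, ← Real.rpow_mul (by positivity),
    Real.mul_rpow zero_le_two hV.le, div_div_eq_mul_div,
    div_eq_div_iff (by positivity) (by positivity), h2, ← hV']
  ring

/-- Fractional Poincaré inequality: for `u ∈ L^p(ℝ^N)` vanishing a.e. outside a bounded
set `Ω`, the Gagliardo seminorm controls `(C/|Ω|^{sp/N}) ‖u‖_{L^p(Ω)}^p`. -/
theorem fractional_poincare (N : ℕ) (hN : 0 < N) (s p : ℝ)
    (hs : s ∈ Set.Ioo (0 : ℝ) 1) (hp : 1 < p) :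
    ∃ C : ℝ, 0 < C ∧
      ∀ (Ω : Set (Fin N → ℝ)), MeasurableSet Ω → Bornology.IsBounded Ω →
        ∀ u : (Fin N → ℝ) → ℝ, Measurable u →
          MemLp u (ENNReal.ofReal p) volume →
          (∀ᵐ x, x ∉ Ω → u x = 0) →
          ENNReal.ofReal (C / (volume Ω).toReal ^ (s * p / N)) *
              ∫⁻ x in Ω, ENNReal.ofReal (|u x| ^ p) ≤
            ∫⁻ x, ∫⁻ y, ENNReal.ofReal (|u x - u y| ^ p / ‖x - y‖ ^ ((N : ℝ) + s * p)) := by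
  have hsp : 0 < s * p := mul_pos hs.1 (zero_lt_one.trans hp)
  refine ⟨2 ^ ((1 - (N : ℝ)⁻¹) * (N + s * p)), by positivity, ?_⟩
  intro Ω hΩ hΩb u _ _ hu
  have hΩfin : volume Ω ≠ ∞ := hΩb.measure_lt_top.ne
  rcases ENNReal.toReal_nonneg.eq_or_lt with hV | hV
  · rw [setLIntegral_measure_zero _ _
      (((ENNReal.toReal_eq_zero_iff _).1 hV.symm).resolve_right hΩfin), mul_zero]
    exact zero_le
  set R := (2 * (volume Ω).toReal) ^ (N : ℝ)⁻¹ / 2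
  have hball (x : Fin N → ℝ) : 2 * volume Ω ≤ volume (Metric.ball x R) := by
    rw [volume_pi_ball_rpow_inv_div_two hN x hV, ENNReal.ofReal_mul zero_le_two,
      ENNReal.ofReal_toReal hΩfin, ENNReal.ofReal_ofNat]
  have hconst : ENNReal.ofReal (2 ^ ((1 - (N : ℝ)⁻¹) * (N + s * p)) /
      (volume Ω).toReal ^ (s * p / N)) = volume Ω / ENNReal.ofReal (R ^ ((N : ℝ) + s * p)) := by
    rw [← div_rpow_inv_div_two_rpow hN hV, ENNReal.ofReal_div_of_pos (by positivity),
      ENNReal.ofReal_toReal hΩfin]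
  rw [hconst]
  exact measure_div_rpow_mul_setLIntegral_le_gagliardo hΩ hΩfin hu (by positivity)
    (by positivity) fun x _ => hball x
end

section
/- Let p ≥ 2 and w, u : Ω → ℝ with w bounded, w ≥ 0, u ≥ 1/n for some n ∈ ℕ. Then for all x, y, |w(x)^p/u(x)^{p-1} - w(y)^p/u(y)^{p-1}| ≤ C(n, p, ‖w‖_∞)·(|w(x) - w(y)| + |u(x) - u(y)|) for some constant C depending only on n, p, ‖w‖_∞. -/
open Set

lemma rpow_lip_aux (p K : ℝ) (hp : 1 ≤ p) {a b : ℝ}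
    (ha : a ∈ Set.Icc 0 K) (hb : b ∈ Set.Icc 0 K) :
    |a ^ p - b ^ p| ≤ p * K ^ (p - 1) * |a - b| := by
  have key := Convex.norm_image_sub_le_of_norm_hasDerivWithin_le
    (f := fun x : ℝ => x ^ p) (f' := fun x : ℝ => p * x ^ (p - 1)) (s := Set.Icc 0 K) (C := p * K ^ (p - 1))
    (fun x hx => ((Real.hasDerivAt_rpow_const (Or.inr hp)).hasDerivWithinAt))
    (fun x hx => by
      have h0 : 0 ≤ x := hx.1
      have h1 : x ≤ K := hx.2
      have : x ^ (p - 1) ≤ K ^ (p - 1) :=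
        Real.rpow_le_rpow h0 h1 (by linarith)
      have hx' : 0 ≤ x ^ (p - 1) := Real.rpow_nonneg h0 _
      rw [Real.norm_eq_abs, abs_mul, abs_of_nonneg (by linarith : (0:ℝ) ≤ p),
        abs_of_nonneg hx']
      nlinarith)
    (convex_Icc 0 K) hb ha
  simpa [Real.norm_eq_abs] using key

lemma inv_rpow_lip_aux (p c : ℝ) (hp : 2 ≤ p) (hc : 0 < c) {s t : ℝ}
    (hs : s ∈ Set.Ici c) (ht : t ∈ Set.Ici c) :
    |s ^ (1 - p) - t ^ (1 - p)| ≤ (p - 1) * c ^ (-p) * |s - t| := by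
  have key := Convex.norm_image_sub_le_of_norm_hasDerivWithin_le
    (f := fun x : ℝ => x ^ (1 - p)) (f' := fun x : ℝ => (1 - p) * x ^ (-p)) (s := Set.Ici c) (C := (p - 1) * c ^ (-p))
    (fun x hx => by
      have hx0 : x ≠ 0 := ne_of_gt (lt_of_lt_of_le hc hx)
      have h := Real.hasDerivAt_rpow_const (p := 1 - p) (Or.inl hx0)
      have : (1 - p) * x ^ (1 - p - 1) = (1 - p) * x ^ (-p) := by ring_nf
      rw [this] at h
      exact h.hasDerivWithinAt)
    (fun x hx => by
      have hx0 : 0 < x := lt_of_lt_of_le hc hx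
      have h1 : x ^ (-p) ≤ c ^ (-p) :=
        Real.rpow_le_rpow_of_nonpos hc hx (by linarith)
      have h2 : 0 ≤ x ^ (-p) := Real.rpow_nonneg hx0.le _
      rw [Real.norm_eq_abs, abs_mul, abs_of_nonpos (by linarith : (1:ℝ) - p ≤ 0),
        abs_of_nonneg h2]
      nlinarith)
    (convex_Ici c) ht hs
  simpa [Real.norm_eq_abs] using key

/-- Lipschitz-type estimate for the Picone test function `w^p / u^{p-1}` when `w` is
bounded and nonnegative and `u ≥ 1/n`. -/
theorem picone_test_function_estimate (α : Type*) (p : ℝ) (hp : 2 ≤ p)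
    (n : ℕ) (hn : 0 < n) (M : ℝ) :
    ∃ C : ℝ, 0 < C ∧ ∀ w u : α → ℝ,
      (∀ x, 0 ≤ w x) → (∀ x, w x ≤ M) → (∀ x, 1 / (n : ℝ) ≤ u x) →
      ∀ x y, |w x ^ p / u x ^ (p - 1) - w y ^ p / u y ^ (p - 1)| ≤
        C * (|w x - w y| + |u x - u y|) := by
  have hp0 : 0 < p := by linarith
  have hp1 : 0 < p - 1 := by linarith
  set K : ℝ := max M 1 with hKdef
  have hK1 : (1:ℝ) ≤ K := le_max_right _ _
  have hK0 : (0:ℝ) < K := lt_of_lt_of_le one_pos hK1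
  have hnR : (0:ℝ) < (n : ℝ) := Nat.cast_pos.mpr hn
  have hn' : (0:ℝ) < 1 / n := by positivity
  set C1 : ℝ := p * K ^ (p - 1) * (n : ℝ) ^ (p - 1) with hC1
  set C2 : ℝ := K ^ p * ((p - 1) * (n : ℝ) ^ p) with hC2
  have hC1pos : 0 < C1 := by positivity
  have hC2pos : 0 < C2 := by positivity
  refine ⟨C1 + C2, by positivity, ?_⟩
  intro w u hw0 hwM hu x y
  have hux : 1 / (n:ℝ) ≤ u x := hu x
  have huy : 1 / (n:ℝ) ≤ u y := hu y
  have hux0 : 0 < u x := lt_of_lt_of_le hn' hux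
  have huy0 : 0 < u y := lt_of_lt_of_le hn' huy
  -- rewrite division as multiplication by rpow (1 - p)
  have e : ∀ z : ℝ, 0 < z → ∀ a : ℝ, a ^ p / z ^ (p - 1) = a ^ p * z ^ (1 - p) := by
    intro z hz a
    rw [div_eq_mul_inv, ← Real.rpow_neg hz.le, show -(p - 1) = 1 - p by ring]
  rw [e _ hux0, e _ huy0]
  -- decomposition
  have decomp : w x ^ p * u x ^ (1 - p) - w y ^ p * u y ^ (1 - p)
      = (w x ^ p - w y ^ p) * u x ^ (1 - p)
        + w y ^ p * (u x ^ (1 - p) - u y ^ (1 - p)) := by ring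
  rw [decomp]
  -- bounds
  have hwxK : w x ∈ Set.Icc 0 K := ⟨hw0 x, le_trans (hwM x) (le_max_left M 1)⟩
  have hwyK : w y ∈ Set.Icc 0 K := ⟨hw0 y, le_trans (hwM y) (le_max_left M 1)⟩
  have hA : |w x ^ p - w y ^ p| ≤ p * K ^ (p - 1) * |w x - w y| :=
    rpow_lip_aux p K (by linarith) hwxK hwyK
  have hB : |u x ^ (1 - p) - u y ^ (1 - p)|
      ≤ (p - 1) * (1 / (n:ℝ)) ^ (-p) * |u x - u y| :=
    inv_rpow_lip_aux p (1 / n) hp hn' hux huy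
  have hinv1 : ((1 : ℝ) / n) ^ (-p) = (n : ℝ) ^ p := by
    rw [one_div, Real.inv_rpow hnR.le, Real.rpow_neg hnR.le, inv_inv]
  have hux_bound : u x ^ (1 - p) ≤ (n : ℝ) ^ (p - 1) := by
    have h := Real.rpow_le_rpow_of_nonpos hn' hux (by linarith : 1 - p ≤ 0)
    calc u x ^ (1 - p) ≤ ((1:ℝ)/n) ^ (1 - p) := h
      _ = (n : ℝ) ^ (p - 1) := by
          rw [one_div, Real.inv_rpow hnR.le, ← Real.rpow_neg hnR.le,
            show -(1 - p) = p - 1 by ring]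
  have hwyp : w y ^ p ≤ K ^ p := Real.rpow_le_rpow (hw0 y) hwyK.2 hp0.le
  have hwyp0 : 0 ≤ w y ^ p := Real.rpow_nonneg (hw0 y) _
  have hux1p0 : 0 ≤ u x ^ (1 - p) := Real.rpow_nonneg hux0.le _
  rw [hinv1] at hB
  have T1 : |(w x ^ p - w y ^ p) * u x ^ (1 - p)| ≤ C1 * |w x - w y| := by
    rw [abs_mul, abs_of_nonneg hux1p0, hC1]
    have habs : 0 ≤ |w x ^ p - w y ^ p| := abs_nonneg _
    have hN : (0:ℝ) ≤ (n:ℝ) ^ (p - 1) := Real.rpow_nonneg hnR.le _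
    calc |w x ^ p - w y ^ p| * u x ^ (1 - p)
        ≤ (p * K ^ (p - 1) * |w x - w y|) * ((n:ℝ) ^ (p - 1)) := by
          apply mul_le_mul hA hux_bound hux1p0 (by positivity)
      _ = p * K ^ (p - 1) * (n:ℝ) ^ (p - 1) * |w x - w y| := by ring
  have T2 : |w y ^ p * (u x ^ (1 - p) - u y ^ (1 - p))| ≤ C2 * |u x - u y| := by
    rw [abs_mul, abs_of_nonneg hwyp0, hC2]
    calc w y ^ p * |u x ^ (1 - p) - u y ^ (1 - p)|
        ≤ K ^ p * ((p - 1) * (n:ℝ) ^ p * |u x - u y|) :=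
          mul_le_mul hwyp hB (abs_nonneg _) (by positivity)
      _ = K ^ p * ((p - 1) * (n:ℝ) ^ p) * |u x - u y| := by ring
  calc |(w x ^ p - w y ^ p) * u x ^ (1 - p)
        + w y ^ p * (u x ^ (1 - p) - u y ^ (1 - p))|
      ≤ |(w x ^ p - w y ^ p) * u x ^ (1 - p)|
        + |w y ^ p * (u x ^ (1 - p) - u y ^ (1 - p))| := abs_add_le _ _
    _ ≤ C1 * |w x - w y| + C2 * |u x - u y| := add_le_add T1 T2
    _ ≤ (C1 + C2) * (|w x - w y| + |u x - u y|) := by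
        have h1 : 0 ≤ |w x - w y| := abs_nonneg _
        have h2 : 0 ≤ |u x - u y| := abs_nonneg _
        nlinarith [hC1pos.le, hC2pos.le]
end
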